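/- If f ∈ ℝ[x,y] is a polynomial with at most t nonzero terms, then V(f(x, x+1)) ≤ 2t - 2, provided f is nonzero. -/

import Mathlib

open Polynomial

/-- Number of sign changes in the coefficient sequence, disregarding zeros. -/
noncomputable def signVar (p : Polynomial ℝ) : ℕ :=
  let l := (((List.range (p.natDegree + 1)).map fun i => p.coeff i).filter fun a => a ≠ 0)
  (l.zip l.tail).countP fun q => q.1 * q.2 < 0

/-- Substitution y = x + 1 into a bivariate polynomial. -/
noncomputable def subXX1 (f : MvPolynomial (Fin 2) ℝ) : Polynomial ℝ :=
  MvPolynomial.aeval ![Polynomial.X, Polynomial.X + 1] f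

/-- `T3 d h = (x+1)^d * h(-x/(x+1))` as a polynomial. -/
noncomputable def T3 (d : ℕ) (h : Polynomial ℝ) : Polynomial ℝ :=
  ∑ i ∈ Finset.range (d + 1),
    Polynomial.C (h.coeff i) * (-Polynomial.X) ^ i * (Polynomial.X + 1) ^ (d - i)

noncomputable def VI1 (h : Polynomial ℝ) : ℕ := signVar h
noncomputable def VI2 (h : Polynomial ℝ) : ℕ := signVar (h.comp (-1 - Polynomial.X))
noncomputable def VI3 (h : Polynomial ℝ) : ℕ := signVar (T3 h.natDegree h)

/-!
Write `f(x, x+1) = ∑ c_m x^(a_m) (x+1)^(b_m)` over the `t` terms of `f` and pull out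
`(x+1)^(min b)`. Multiplying by `x + 1` adds neighbouring coefficients and never creates sign
changes, so it suffices to bound the cofactor, which is a monomial `c x^a` plus a sum of `t - 1`
terms of the same shape. Adding a monomial alters a single coefficient and so adds at most two
sign changes, and a lone monomial has none: induction on `t` gives `V ≤ 2t - 2`.
-/

noncomputable def signFlip (a b : ℝ) : ℕ := if a * b < 0 then 1 else 0

theorem signFlip_eq_zero {a b : ℝ} (h : 0 ≤ a * b) : signFlip a b = 0 :=
  if_neg h.not_gt

theorem signFlip_le_one (a b : ℝ) : signFlip a b ≤ 1 := by
  unfold signFlip; split_ifs <;> omega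

theorem signFlip_le_add {a b c : ℝ} (hb : b ≠ 0) :
    signFlip a c ≤ signFlip a b + signFlip b c := by
  unfold signFlip
  split_ifs <;> first | omega | nlinarith [mul_self_pos.2 hb]

/-- `signVarFrom 0 l` counts the sign changes of `l`, zeros skipped; a nonzero `s` acts as a
virtual first entry. -/
noncomputable def signVarFrom (s : ℝ) : List ℝ → ℕ
  | [] => 0
  | a :: l => if a = 0 then signVarFrom s l else signFlip s a + signVarFrom a l

section signVarFrom

variable {s a : ℝ} {l : List ℝ}

@[simp] theorem signVarFrom_nil : signVarFrom s [] = 0 := rfl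

@[simp] theorem signVarFrom_cons_zero : signVarFrom s (0 :: l) = signVarFrom s l := by
  simp [signVarFrom]

theorem signVarFrom_cons_of_ne_zero (ha : a ≠ 0) :
    signVarFrom s (a :: l) = signFlip s a + signVarFrom a l := by
  simp [signVarFrom, ha]

theorem signVarFrom_le_signFlip_add {y : ℝ} (hy : y ≠ 0) :
    signVarFrom s l ≤ signFlip s y + signVarFrom y l := by
  induction l with
  | nil => simp
  | cons a l ih =>
    by_cases ha : a = 0
    · subst ha; simpa using ih
    · simp only [signVarFrom_cons_of_ne_zero ha]
      have := signFlip_le_add (a := s) (c := a) hy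
      omega

theorem signVarFrom_le_add_one (s' : ℝ) : signVarFrom s l ≤ signVarFrom s' l + 1 := by
  induction l with
  | nil => simp
  | cons a l ih =>
    by_cases ha : a = 0
    · subst ha; simpa using ih
    · simp only [signVarFrom_cons_of_ne_zero ha]
      have := signFlip_le_one s a
      omega

theorem signVarFrom_le_cons (a : ℝ) : signVarFrom s l ≤ signVarFrom s (a :: l) := by
  by_cases ha : a = 0
  · simp [ha]
  · simpa [signVarFrom_cons_of_ne_zero ha] using signVarFrom_le_signFlip_add (s := s) (l := l) ha

theorem signVarFrom_cons_le_add_two (a : ℝ) : signVarFrom s (a :: l) ≤ signVarFrom s l + 2 := by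
  by_cases ha : a = 0
  · simp [ha]
  · rw [signVarFrom_cons_of_ne_zero ha]
    have := signFlip_le_one s a
    have := signVarFrom_le_add_one (l := l) (s := a) s
    omega

theorem signVarFrom_set_le (d : ℕ) (x : ℝ) :
    signVarFrom s (l.set d x) ≤ signVarFrom s l + 2 := by
  induction l generalizing s d with
  | nil => simp
  | cons a l ih =>
    cases d with
    | zero =>
      have := signVarFrom_le_cons (s := s) (l := l) a
      have := signVarFrom_cons_le_add_two (s := s) (l := l) x
      rw [List.set_cons_zero]
      omega
    | succ d =>
      by_cases ha : a = 0
      · subst ha; simpa using ih (s := s) (d := d)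
      · rw [List.set_cons_succ, signVarFrom_cons_of_ne_zero ha, signVarFrom_cons_of_ne_zero ha]
        have := ih (s := a) (d := d)
        omega

theorem signVarFrom_eq_zero (hs : ∀ y ∈ l, 0 ≤ s * y)
    (hl : ∀ x ∈ l, ∀ y ∈ l, 0 ≤ x * y) : signVarFrom s l = 0 := by
  induction l generalizing s with
  | nil => rfl
  | cons a l ih =>
    simp only [List.mem_cons, forall_eq_or_imp] at hs hl
    by_cases ha : a = 0
    · rw [ha, signVarFrom_cons_zero]
      exact ih hs.2 fun x hx y hy => hl.2 x hx |>.2 y hy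
    · rw [signVarFrom_cons_of_ne_zero ha, signFlip_eq_zero hs.1,
        ih hl.1.2 fun x hx y hy => hl.2 x hx |>.2 y hy]

theorem signVarFrom_append_zero : signVarFrom s (l ++ [0]) = signVarFrom s l := by
  induction l generalizing s with
  | nil => simp
  | cons a l ih =>
    by_cases ha : a = 0
    · simp [ha, ih]
    · simp [signVarFrom_cons_of_ne_zero ha, ih]

theorem signVarFrom_filter : signVarFrom s (l.filter (· ≠ 0)) = signVarFrom s l := by
  induction l generalizing s with
  | nil => rfl
  | cons a l ih =>
    by_cases ha : a = 0
    · rw [ha, List.filter_cons_of_neg (by simp), ih, signVarFrom_cons_zero]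
    · rw [List.filter_cons_of_pos (by simpa using ha), signVarFrom_cons_of_ne_zero ha,
        signVarFrom_cons_of_ne_zero ha, ih]

theorem countP_zip_eq_signVarFrom (hl : ∀ x ∈ l, x ≠ 0) :
    (((a :: l).zip l).countP fun q => q.1 * q.2 < 0) = signVarFrom a l := by
  induction l generalizing a with
  | nil => rfl
  | cons b l ih =>
    simp only [List.mem_cons, forall_eq_or_imp] at hl
    rw [List.zip_cons_cons, List.countP_cons, ih hl.2, signVarFrom_cons_of_ne_zero hl.1, signFlip]
    simp only [decide_eq_true_eq]
    split_ifs <;> omega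

theorem countP_zip_tail_filter_eq_signVarFrom :
    (let m := l.filter (· ≠ 0); (m.zip m.tail).countP fun q => q.1 * q.2 < 0) =
      signVarFrom 0 l := by
  rw [← signVarFrom_filter]
  have hm : ∀ x ∈ l.filter (· ≠ 0), x ≠ 0 := fun x hx => by
    simpa using List.of_mem_filter hx
  generalize l.filter (· ≠ 0) = m at hm ⊢
  cases m with
  | nil => rfl
  | cons a m =>
    simp only [List.mem_cons, forall_eq_or_imp] at hm
    simp only [List.tail_cons]
    rw [countP_zip_eq_signVarFrom hm.2, signVarFrom_cons_of_ne_zero hm.1,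
      signFlip_eq_zero (by simp), zero_add]

end signVarFrom

theorem signFlip_add_signFlip_le {s c b : ℝ} (hc : c = 0 ∨ 0 < c * s) (hb : b ≠ 0) :
    signFlip s (c + b) + signFlip (c + b) b ≤ signFlip s b := by
  unfold signFlip
  rcases hc with rfl | hc
  · simp only [zero_add, if_neg (not_lt.2 (mul_self_nonneg b))]; omega
  · split_ifs <;> first | omega | nlinarith [mul_self_pos.2 hb]

/-- The coefficients of `(X + 1) * p` arise from those of `p` by adding each one to its
predecessor; `c` is the predecessor of the first entry. -/
noncomputable def addShift (c : ℝ) (l : List ℝ) : List ℝ :=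
  List.zipWith (· + ·) (c :: l) (l ++ [0])

@[simp] theorem addShift_nil (c : ℝ) : addShift c [] = [c] := by simp [addShift]

@[simp] theorem addShift_cons (c b : ℝ) (l : List ℝ) :
    addShift c (b :: l) = (c + b) :: addShift b l := rfl

/-- The predecessor `c` of `l` either vanishes or has the sign `s` of the last nonzero entry read,
so every new sign change of `addShift c l` is paid for by one of `l`. -/
theorem signVarFrom_addShift_le {s c : ℝ} {l : List ℝ} (hc : c = 0 ∨ 0 < c * s) :
    signVarFrom s (addShift c l) ≤ signVarFrom s l := by
  induction l generalizing s c with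
  | nil =>
    rcases hc with rfl | hc
    · simp
    · simp [signVarFrom_cons_of_ne_zero (left_ne_zero_of_mul hc.ne'),
        signFlip_eq_zero (a := s) (b := c) (by linarith [mul_comm c s])]
  | cons b l ih =>
    rw [addShift_cons]
    by_cases hb : b = 0
    · subst hb
      rw [add_zero, signVarFrom_cons_zero]
      rcases hc with rfl | hc
      · simpa using ih (Or.inl rfl)
      · have hs : s ≠ 0 := right_ne_zero_of_mul hc.ne'
        rw [signVarFrom_cons_of_ne_zero (left_ne_zero_of_mul hc.ne'),
          signFlip_eq_zero (a := s) (b := c) (by linarith [mul_comm c s])]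
        have := signVarFrom_le_signFlip_add (s := c) (l := addShift 0 l) hs
        rw [signFlip_eq_zero hc.le] at this
        have := ih (s := s) (c := 0) (Or.inl rfl)
        omega
    · have ih_b := ih (s := b) (c := b) (Or.inr (mul_self_pos.2 hb))
      rw [signVarFrom_cons_of_ne_zero hb]
      by_cases hcb : c + b = 0
      · rw [hcb, signVarFrom_cons_zero]
        have := signVarFrom_le_signFlip_add (s := s) (l := addShift b l) hb
        omega
      · rw [signVarFrom_cons_of_ne_zero hcb]
        have := signVarFrom_le_signFlip_add (s := c + b) (l := addShift b l) hb
        have := signFlip_add_signFlip_le hc hb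
        omega

noncomputable def coeffsBelow (p : ℝ[X]) (n : ℕ) : List ℝ := (List.range n).map p.coeff

section coeffsBelow

variable {p q : ℝ[X]} {n : ℕ}

theorem coeffsBelow_succ : coeffsBelow p (n + 1) = coeffsBelow p n ++ [p.coeff n] := by
  simp [coeffsBelow, List.range_succ]

theorem coeffsBelow_X_mul : coeffsBelow (X * p) (n + 1) = 0 :: coeffsBelow p n := by
  simp [coeffsBelow, List.range_succ_eq_map, coeff_X_mul]

theorem coeffsBelow_add :
    coeffsBelow (p + q) n = List.zipWith (· + ·) (coeffsBelow p n) (coeffsBelow q n) := by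
  simp [coeffsBelow, List.zipWith_map, List.zipWith_self]

theorem coeffsBelow_eq_set {d : ℕ} (h : ∀ i ≠ d, q.coeff i = p.coeff i) :
    coeffsBelow q n = (coeffsBelow p n).set d (q.coeff d) := by
  refine List.ext_getElem (by simp [coeffsBelow]) fun i _ _ => ?_
  rw [List.getElem_set]
  split_ifs with hd
  · simp [coeffsBelow, hd]
  · simp [coeffsBelow, h i (Ne.symm hd)]

theorem signVar_eq_signVarFrom_coeffsBelow (hn : p.natDegree < n) :
    signVar p = signVarFrom 0 (coeffsBelow p n) := by
  induction n, hn using Nat.le_induction with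
  | base => exact countP_zip_tail_filter_eq_signVarFrom
  | succ n hn ih =>
    rw [coeffsBelow_succ, coeff_eq_zero_of_natDegree_lt hn, signVarFrom_append_zero, ih]

end coeffsBelow

theorem coeffsBelow_X_add_one_mul {p : ℝ[X]} {n : ℕ} (hn : p.natDegree < n) :
    coeffsBelow ((X + 1) * p) (n + 1) = addShift 0 (coeffsBelow p n) := by
  rw [add_mul, one_mul, coeffsBelow_add, coeffsBelow_X_mul, coeffsBelow_succ,
    coeff_eq_zero_of_natDegree_lt hn, addShift]

theorem signVar_X_add_one_mul_le (p : ℝ[X]) : signVar ((X + 1) * p) ≤ signVar p := by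
  have hp : p.natDegree < p.natDegree + 1 := Nat.lt_succ_self _
  have hdeg : ((X + 1) * p).natDegree < p.natDegree + 1 + 1 := by
    have : (X + 1 : ℝ[X]).natDegree ≤ 1 := by compute_degree
    have := natDegree_mul_le (p := X + 1) (q := p)
    omega
  rw [signVar_eq_signVarFrom_coeffsBelow hdeg, coeffsBelow_X_add_one_mul hp,
    signVar_eq_signVarFrom_coeffsBelow hp]
  exact signVarFrom_addShift_le (Or.inl rfl)

theorem signVar_X_add_one_pow_mul_le (k : ℕ) (p : ℝ[X]) :
    signVar ((X + 1) ^ k * p) ≤ signVar p := by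
  induction k with
  | zero => simp
  | succ k ih =>
    rw [pow_succ', mul_assoc]
    exact (signVar_X_add_one_mul_le _).trans ih

theorem signVar_le_add_two_of_coeff_eq {p q : ℝ[X]} {d : ℕ}
    (h : ∀ i ≠ d, q.coeff i = p.coeff i) :
    signVar q ≤ signVar p + 2 := by
  set n := max p.natDegree q.natDegree + 1
  rw [signVar_eq_signVarFrom_coeffsBelow (p := p) (n := n) (by omega),
    signVar_eq_signVarFrom_coeffsBelow (p := q) (n := n) (by omega), coeffsBelow_eq_set h]
  exact signVarFrom_set_le _ _

theorem signVar_add_monomial_le (p : ℝ[X]) (d : ℕ) (c : ℝ) :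
    signVar (p + monomial d c) ≤ signVar p + 2 :=
  signVar_le_add_two_of_coeff_eq (d := d) fun i hi => by simp [coeff_monomial, Ne.symm hi]

theorem signVar_monomial (d : ℕ) (c : ℝ) : signVar (monomial d c) = 0 := by
  have hdeg := (natDegree_monomial_le c).trans_lt d.lt_succ_self
  rw [signVar_eq_signVarFrom_coeffsBelow hdeg]
  refine signVarFrom_eq_zero (by simp) fun x hx y hy => ?_
  simp only [coeffsBelow, List.mem_map, coeff_monomial] at hx hy
  obtain ⟨i, -, rfl⟩ := hx
  obtain ⟨j, -, rfl⟩ := hy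
  split_ifs <;> simp [mul_self_nonneg]

theorem signVar_sum_monomial_mul_X_add_one_pow_add_two_le {ι : Type*} (s : Finset ι)
    (hs : s.Nonempty) (c : ι → ℝ) (a b : ι → ℕ) :
    signVar (∑ i ∈ s, monomial (a i) (c i) * (X + 1) ^ b i) + 2 ≤ 2 * s.card := by
  classical
  induction s using Finset.strongInduction generalizing b with
  | H s ih =>
    obtain ⟨i, hi, hmin⟩ := s.exists_min_image b hs
    set rest := ∑ j ∈ s.erase i, monomial (a j) (c j) * (X + 1) ^ (b j - b i) with hrest
    have hfactor : ∑ j ∈ s, monomial (a j) (c j) * (X + 1) ^ b j =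
        (X + 1) ^ b i * (rest + monomial (a i) (c i)) := by
      rw [mul_add, Finset.mul_sum, ← Finset.sum_erase_add s _ hi]
      congr 1
      · refine Finset.sum_congr rfl fun j hj => ?_
        rw [mul_left_comm, ← pow_add, Nat.add_sub_cancel' (hmin j (Finset.mem_of_mem_erase hj))]
      · ring
    have hcard := Finset.card_erase_add_one hi
    rw [hfactor]
    have hpow := signVar_X_add_one_pow_mul_le (b i) (rest + monomial (a i) (c i))
    rcases (s.erase i).eq_empty_or_nonempty with he | hne
    · have hrest_zero : rest = 0 := by rw [hrest, he, Finset.sum_empty]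
      rw [hrest_zero, zero_add] at hpow ⊢
      rw [signVar_monomial] at hpow
      rw [he, Finset.card_empty] at hcard
      omega
    · have hrest_le : signVar rest + 2 ≤ 2 * (s.erase i).card :=
        ih _ (Finset.erase_ssubset hi) hne (fun j => b j - b i)
      have := signVar_add_monomial_le rest (a i) (c i)
      omega

theorem subXX1_eq_sum (f : MvPolynomial (Fin 2) ℝ) :
    subXX1 f = ∑ m ∈ f.support, monomial (m 0) (f.coeff m) * (X + 1) ^ m 1 := by
  conv_lhs => rw [subXX1, f.as_sum, map_sum]
  refine Finset.sum_congr rfl fun m _ => ?_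
  rw [MvPolynomial.aeval_monomial, Finsupp.prod_fintype _ _ fun _ => pow_zero _, Fin.prod_univ_two,
    ← C_mul_X_pow_eq_monomial]
  simp [mul_assoc]

theorem stmt3 (f : MvPolynomial (Fin 2) ℝ) (t : ℕ) (hf : f ≠ 0)
    (ht : f.support.card ≤ t) :
    (signVar (subXX1 f) : ℤ) ≤ 2 * t - 2 := by
  have h := signVar_sum_monomial_mul_X_add_one_pow_add_two_le f.support
    (MvPolynomial.support_nonempty.2 hf) f.coeff (fun m => m 0) (fun m => m 1)
  rw [← subXX1_eq_sum] at h
  omega
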